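/- arXiv:2506.21652 — 9 statements merged into one kernel-verified Lean document; each statement's English description precedes it below -/
import Mathlib

section
/- Let H and K be subgroups of a group G with H ⊆ K. Then H is a pronormal subgroup of K if and only if the characteristic function 1_H is a pronormal L-subgroup of 1_K. -/
open scoped Classical

section Defs

variable {G : Type*} [Group G] {L : Type*} [CompletelyDistribLattice L]

/-- `μ` is an `L`-subgroup of the group `G`. -/
def IsLSubgroup (μ : G → L) : Prop :=
  (∀ x y : G, μ x ⊓ μ y ≤ μ (x * y)) ∧ (∀ x : G, μ x⁻¹ = μ x)

/-- The conjugate `η^{a_z}` of `η` by the `L`-point `a_z`. -/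
def LConj (η : G → L) (a : L) (z : G) : G → L :=
  fun x => a ⊓ η (z * x * z⁻¹)

/-- The `L`-subgroup generated by the `L`-subset `η`. -/
def LGen (η : G → L) : G → L :=
  fun x => ⨅ θ ∈ {θ : G → L | IsLSubgroup θ ∧ η ≤ θ}, θ x

/-- `η` is a pronormal `L`-subgroup of `μ`. -/
def IsLPronormal (μ η : G → L) : Prop :=
  IsLSubgroup η ∧ η ≤ μ ∧
    ∀ (a : L) (x : G), a ≤ μ x →
      ∃ (b : L) (y : G), b ≤ LGen (η ⊔ LConj η a x) y ∧ LConj η b y = LConj η a x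

/-- `η` is a normal `L`-subgroup of `μ`. -/
def IsLNormal (μ η : G → L) : Prop :=
  IsLSubgroup η ∧ η ≤ μ ∧ ∀ x y : G, η x ⊓ μ y ≤ η (y * x * y⁻¹)

/-- Set product of two `L`-subsets. -/
def LSetProd (η ν : G → L) : G → L :=
  fun x => ⨆ y : G, ⨆ z : G, ⨆ _ : y * z = x, η y ⊓ ν z

/-- The normalizer `N(η)` of `η` in `μ`. -/
def LNormalizer (μ η : G → L) : G → L :=
  fun z => sSup {a : L | a ≤ μ z ∧ LConj η a z ≤ η}

/-- The conjugate `μημ⁻¹` of `η` in `μ`. -/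
def LConjAll (μ η : G → L) : G → L :=
  fun x => ⨆ z : G, ⨆ y : G, ⨆ _ : x = z * y * z⁻¹, η y ⊓ μ z

/-- The normal closure `η^μ` of `η` in `μ`. -/
def LNormalClosure (μ η : G → L) : G → L := LGen (LConjAll μ η)

/-- The normal closure series `η₀ = μ`, `ηᵢ₊₁ = η^{ηᵢ}`. -/
def LNcSeries (μ η : G → L) : ℕ → (G → L)
  | 0 => μ
  | n + 1 => LNormalClosure (LNcSeries μ η n) η

/-- `η` is a subnormal `L`-subgroup of `μ`. -/
def IsLSubnormal (μ η : G → L) : Prop := ∃ m : ℕ, LNcSeries μ η m = η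

/-- The commutator `(η, θ)` of two `L`-subsets. -/
noncomputable def LCommFun (η θ : G → L) : G → L :=
  fun x =>
    if ∃ y z : G, x = y * z * y⁻¹ * z⁻¹ then
      ⨆ y : G, ⨆ z : G, ⨆ _ : x = y * z * y⁻¹ * z⁻¹, η y ⊓ θ z
    else (⨅ g : G, η g) ⊓ (⨅ g : G, θ g)

/-- The descending central chain `Z₀(μ) = μ`, `Zᵢ₊₁(μ) = [Zᵢ(μ), μ]`. -/
noncomputable def LDcc (μ : G → L) : ℕ → (G → L)
  | 0 => μ
  | n + 1 => LGen (LCommFun (LDcc μ n) μ)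

/-- The trivial `L`-subgroup with the same tip and tail as `μ`. -/
noncomputable def LTrivial (μ : G → L) : G → L :=
  fun x => if x = 1 then μ 1 else ⨅ g : G, μ g

/-- `μ` is a nilpotent `L`-group. -/
def IsLNilpotent (μ : G → L) : Prop := ∃ n : ℕ, LDcc μ n = LTrivial μ

/-- Sup-property of an `L`-subset. -/
def SupProp (μ : G → L) : Prop :=
  ∀ A : Set G, A.Nonempty → ∃ a ∈ A, μ a = ⨆ x ∈ A, μ x

end Defs

/-- Image of an `L`-subset under a map. -/
def LImage {G H L : Type*} [CompleteLattice L] (f : G → H) (μ : G → L) : H → L :=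
  fun y => ⨆ x : G, ⨆ _ : f x = y, μ x

section Aux

variable {G : Type*} [Group G] {L : Type*} [CompletelyDistribLattice L]

lemma chi_isLSubgroup (S : Subgroup G) :
    IsLSubgroup (fun x => if x ∈ S then (⊤ : L) else ⊥) := by
  constructor
  · intro x y
    by_cases hx : x ∈ S <;> by_cases hy : y ∈ S <;>
      simp [hx, hy, S.mul_mem]
  · intro x; simp [inv_mem_iff]

lemma le_LGen_of_mem_closure {A : Set G} (η : G → L) (a : L)
    (hηA : ∀ g ∈ A, a ≤ η g) (hne : A.Nonempty)
    {y : G} (hy : y ∈ Subgroup.closure A) : a ≤ LGen η y := by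
  refine le_iInf fun θ => le_iInf fun hθ => ?_
  obtain ⟨⟨hmul, hinv⟩, hle⟩ := hθ
  induction hy using Subgroup.closure_induction with
  | mem g hg => exact (hηA g hg).trans (hle g)
  | one =>
      obtain ⟨g₀, hg₀⟩ := hne
      have h1 : a ≤ θ g₀ := (hηA g₀ hg₀).trans (hle g₀)
      have h2 : a ≤ θ (g₀ * g₀⁻¹) :=
        le_trans (le_inf h1 (by rw [hinv]; exact h1)) (hmul g₀ g₀⁻¹)
      simpa using h2
  | mul g h _ _ ihg ihh => exact (le_inf ihg ihh).trans (hmul g h)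
  | inv g _ ih => rw [hinv g]; exact ih

lemma LGen_le {η θ : G → L} (hθ : IsLSubgroup θ) (h : η ≤ θ) : LGen η ≤ θ :=
  fun x => iInf₂_le θ ⟨hθ, h⟩

end Aux

theorem stmt3 {G : Type*} [Group G] {L : Type*} [CompletelyDistribLattice L] [Nontrivial L]
    (H K : Subgroup G) (hHK : H ≤ K) :
    (∀ x ∈ K, ∃ y ∈ Subgroup.closure ((H : Set G) ∪ (fun g => x⁻¹ * g * x) '' (H : Set G)),
        (fun g => y⁻¹ * g * y) '' (H : Set G) = (fun g => x⁻¹ * g * x) '' (H : Set G)) ↔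
      IsLPronormal (fun x : G => if x ∈ K then (⊤ : L) else ⊥)
        (fun x : G => if x ∈ H then (⊤ : L) else ⊥) := by
  set η : G → L := fun x => if x ∈ H then (⊤ : L) else ⊥ with hη
  set μ : G → L := fun x => if x ∈ K then (⊤ : L) else ⊥ with hμ
  constructor
  · intro hCl
    refine ⟨chi_isLSubgroup H, ?_, ?_⟩
    · intro g
      by_cases hg : g ∈ H
      · simp [hη, hμ, hg, hHK hg]
      · simp [hη, hg]
    · intro a x hax
      by_cases hx : x ∈ K
      · obtain ⟨y, hy, hset⟩ := hCl x hx
        have hmemiff : ∀ g : G, (y * g * y⁻¹ ∈ H) ↔ (x * g * x⁻¹ ∈ H) := by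
          intro g
          have h1 : g ∈ (fun g => y⁻¹ * g * y) '' (H : Set G) ↔ y * g * y⁻¹ ∈ H := by
            constructor
            · rintro ⟨h, hh, rfl⟩; simpa [mul_assoc] using hh
            · intro hh; exact ⟨y * g * y⁻¹, hh, by group⟩
          have h2 : g ∈ (fun g => x⁻¹ * g * x) '' (H : Set G) ↔ x * g * x⁻¹ ∈ H := by
            constructor
            · rintro ⟨h, hh, rfl⟩; simpa [mul_assoc] using hh
            · intro hh; exact ⟨x * g * x⁻¹, hh, by group⟩
          rw [← h1, ← h2, hset]
        refine ⟨a, y, ?_, ?_⟩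
        · refine le_LGen_of_mem_closure _ a ?_ ?_ hy
          swap
          · exact ⟨1, Or.inl H.one_mem⟩
          intro g hg
          rcases hg with hg | ⟨h, hh, rfl⟩
          · refine le_trans ?_ le_sup_left
            show a ≤ if g ∈ H then (⊤ : L) else ⊥
            rw [if_pos (show g ∈ H from hg)]; exact le_top
          · refine le_trans ?_ le_sup_right
            have : x * (x⁻¹ * h * x) * x⁻¹ ∈ H := by
              simpa [mul_assoc] using hh
            simp [LConj, hη, this]
        · funext g
          simp only [LConj, hη]
          rw [show (if y * g * y⁻¹ ∈ H then (⊤ : L) else ⊥) =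
              (if x * g * x⁻¹ ∈ H then (⊤ : L) else ⊥) by
            simp only [hmemiff g]]
      · have ha : a = ⊥ := le_bot_iff.mp (by simpa [hμ, hx] using hax)
        refine ⟨⊥, 1, bot_le, ?_⟩
        funext g
        simp [LConj, ha]
  · rintro ⟨-, -, hP⟩ x hx
    obtain ⟨b, y, hb, heq⟩ := hP ⊤ x (by simp [hμ, hx])
    have hb_top : b = ⊤ := by
      have := congrFun heq 1
      simpa [LConj, hη, H.one_mem] using this
    subst hb_top
    have hygen : y ∈ Subgroup.closure ((H : Set G) ∪ (fun g => x⁻¹ * g * x) '' (H : Set G)) := by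
      set A : Set G := (H : Set G) ∪ (fun g => x⁻¹ * g * x) '' (H : Set G) with hA
      have hle : η ⊔ LConj η ⊤ x ≤ fun g => if g ∈ Subgroup.closure A then (⊤ : L) else ⊥ := by
        intro g
        refine sup_le ?_ ?_
        · show (if g ∈ H then (⊤ : L) else ⊥) ≤ if g ∈ Subgroup.closure A then (⊤ : L) else ⊥
          by_cases hg : g ∈ H
          · have hc : g ∈ Subgroup.closure A := Subgroup.subset_closure (Or.inl hg)
            rw [if_pos hc]; exact le_top
          · rw [if_neg hg]; exact bot_le
        · show (⊤ : L) ⊓ (if x * g * x⁻¹ ∈ H then (⊤ : L) else ⊥) ≤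
            if g ∈ Subgroup.closure A then (⊤ : L) else ⊥
          by_cases hg : x * g * x⁻¹ ∈ H
          · have hmem : g ∈ A := Or.inr ⟨x * g * x⁻¹, hg, by group⟩
            rw [if_pos (show g ∈ Subgroup.closure A from Subgroup.subset_closure hmem)]; exact le_top
          · rw [if_neg hg]; simp
      have := le_trans hb
        (LGen_le (chi_isLSubgroup (Subgroup.closure A)) hle y)
      by_contra hcon
      simp only [hcon, if_false, top_le_iff] at this
      exact bot_ne_top this
    refine ⟨y, hygen, ?_⟩
    have hiff : ∀ g : G, (y * g * y⁻¹ ∈ H) ↔ (x * g * x⁻¹ ∈ H) := by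
      intro g
      have h := congrFun heq g
      simp only [LConj, hη, top_inf_eq] at h
      by_cases h1 : y * g * y⁻¹ ∈ H <;> by_cases h2 : x * g * x⁻¹ ∈ H <;>
        simp_all [top_ne_bot]
    ext g
    have h1 : g ∈ (fun g => y⁻¹ * g * y) '' (H : Set G) ↔ y * g * y⁻¹ ∈ H := by
      constructor
      · rintro ⟨h, hh, rfl⟩; simpa [mul_assoc] using hh
      · intro hh; exact ⟨y * g * y⁻¹, hh, by group⟩
    have h2 : g ∈ (fun g => x⁻¹ * g * x) '' (H : Set G) ↔ x * g * x⁻¹ ∈ H := by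
      constructor
      · rintro ⟨h, hh, rfl⟩; simpa [mul_assoc] using hh
      · intro hh; exact ⟨x * g * x⁻¹, hh, by group⟩
    rw [h1, h2, hiff g]
end

section
/- Let f : G → H be a surjective group homomorphism, μ an L-subgroup of G possessing the sup-property. If η is a pronormal L-subgroup of μ, then the image f(η) is a pronormal L-subgroup of f(μ). -/
open scoped Classical

section Aux

variable {G H : Type*} [Group G] [Group H] {L : Type*} [CompletelyDistribLattice L]

lemma le_limage_apply (f : G → H) (ρ : G → L) (x : G) : ρ x ≤ LImage f ρ (f x) :=
  le_iSup_of_le x (le_iSup_of_le rfl le_rfl)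

lemma limage_mono (f : G → H) {η μ : G → L} (h : η ≤ μ) : LImage f η ≤ LImage f μ :=
  fun _ => iSup₂_le fun x hx => le_iSup₂_of_le x hx (h x)

lemma limage_conj (f : G →* H) (η : G → L) (a : L) (x : G) :
    LImage f (LConj η a x) = LConj (LImage f η) a (f x) := by
  funext z'
  simp only [LImage, LConj, inf_iSup_eq]
  apply le_antisymm
  · refine iSup₂_le fun z hz => ?_
    refine le_iSup₂_of_le (x * z * x⁻¹) ?_ le_rfl
    simp [hz, mul_assoc]
  · refine iSup₂_le fun w hw => ?_
    refine le_iSup₂_of_le (x⁻¹ * w * x) ?_ ?_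
    · have : f w = f x * z' * (f x)⁻¹ := hw
      simp [this, mul_assoc]
    · have : x * (x⁻¹ * w * x) * x⁻¹ = w := by group
      rw [this]

lemma limage_sup (f : G → H) (η θ : G → L) :
    LImage f (η ⊔ θ) = LImage f η ⊔ LImage f θ := by
  funext y
  simp only [LImage, Pi.sup_apply]
  apply le_antisymm
  · refine iSup₂_le fun x hx => ?_
    exact sup_le_sup (le_iSup₂_of_le x hx le_rfl) (le_iSup₂_of_le x hx le_rfl)
  · refine sup_le (iSup₂_le fun x hx => le_iSup₂_of_le x hx le_sup_left)
      (iSup₂_le fun x hx => le_iSup₂_of_le x hx le_sup_right)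

lemma limage_subgroup (f : G →* H) {η : G → L} (hη : IsLSubgroup η) :
    IsLSubgroup (LImage f η) := by
  constructor
  · intro x y
    have : LImage f η x ⊓ LImage f η y
        = ⨆ w, ⨆ _ : f w = y, ⨆ z, ⨆ _ : f z = x, η z ⊓ η w := by
      simp only [LImage, iSup_inf_eq, inf_iSup_eq]
    rw [this]
    refine iSup₂_le fun w hw => iSup₂_le fun z hz => ?_
    refine le_trans (hη.1 z w) (le_iSup₂_of_le (z * w) ?_ le_rfl)
    simp [hz, hw]
  · intro x
    apply le_antisymm
    · refine iSup₂_le fun z hz => le_iSup₂_of_le z⁻¹ ?_ ?_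
      · simp [hz]
      · rw [hη.2]
    · refine iSup₂_le fun z hz => le_iSup₂_of_le z⁻¹ ?_ ?_
      · simp [hz]
      · rw [hη.2]

lemma limage_gen_le (f : G →* H) (ν : G → L) :
    LImage f (LGen ν) ≤ LGen (LImage f ν) := by
  intro y'
  refine iSup₂_le fun x hx => ?_
  subst hx
  refine le_iInf fun θ => le_iInf fun hθ => ?_
  have hmem : (fun g => θ (f g)) ∈ {θ' : G → L | IsLSubgroup θ' ∧ ν ≤ θ'} := by
    refine ⟨⟨fun a b => ?_, fun a => ?_⟩, fun g => ?_⟩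
    · simpa using hθ.1.1 (f a) (f b)
    · simpa using hθ.1.2 (f a)
    · exact le_trans (le_limage_apply f ν g) (hθ.2 (f g))
  exact iInf₂_le (fun g => θ (f g)) hmem

end Aux

theorem stmt4 {G H : Type*} [Group G] [Group H] {L : Type*} [CompletelyDistribLattice L]
    (f : G →* H) (hf : Function.Surjective f)
    (μ η : G → L) (hμ : IsLSubgroup μ) (hsup : SupProp μ)
    (hpro : IsLPronormal μ η) :
    IsLPronormal (LImage f μ) (LImage f η) := by
  obtain ⟨hηsub, hημ, hcond⟩ := hpro
  refine ⟨limage_subgroup f hηsub, limage_mono f hημ, ?_⟩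
  intro a x' ha
  obtain ⟨x₀, hx₀A, hx₀⟩ := hsup {x : G | f x = x'} (hf x')
  have hx₀' : f x₀ = x' := hx₀A
  have haμ : a ≤ μ x₀ := by
    rw [hx₀]
    exact ha
  obtain ⟨b, y, hb, hconj⟩ := hcond a x₀ haμ
  refine ⟨b, f y, ?_, ?_⟩
  · have h1 : b ≤ LImage f (LGen (η ⊔ LConj η a x₀)) (f y) :=
      le_trans hb (le_limage_apply f _ y)
    have h2 := le_trans h1 (limage_gen_le f (η ⊔ LConj η a x₀) (f y))
    rwa [limage_sup, limage_conj, hx₀'] at h2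
  · rw [← limage_conj, hconj, limage_conj, hx₀']
end

section
/- Let L be an upper well ordered lattice, μ an L-subgroup of G, and η a pronormal L-subgroup of μ. Then for every t ≤ η(e), the level subset η_t is a pronormal subgroup of μ_t. -/
open scoped Classical

theorem total_of_hL {L : Type*} [CompletelyDistribLattice L]
    (hL : ∀ S : Set L, S.Nonempty → sSup S ∈ S) (a b : L) : a ≤ b ∨ b ≤ a := by
  have h := hL {a, b} ⟨a, by simp⟩
  rw [sSup_pair] at h
  rcases h with h | h
  · right; rw [← h]; exact le_sup_right
  · left; rw [← h]; exact le_sup_left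

theorem mem_closure_of_le_LGen {G : Type*} [Group G] {L : Type*}
    [CompletelyDistribLattice L]
    (hL : ∀ S : Set L, S.Nonempty → sSup S ∈ S)
    (ν : G → L) (t : L) (y : G) (hy : t ≤ LGen ν y) :
    y ∈ Subgroup.closure {h : G | t ≤ ν h} := by
  classical
  set K := Subgroup.closure {h : G | t ≤ ν h} with hK
  by_contra hyK
  set c : L := sSup (ν '' {z : G | z ∉ K}) with hc
  set θ : G → L := fun x => if x ∈ K then ⊤ else c with hθ
  have hsub : IsLSubgroup θ := by
    constructor
    · intro x z
      by_cases hxz : x * z ∈ K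
      · simp [θ, hxz]
      · have hx : x ∉ K ∨ z ∉ K := by
          by_contra h
          push_neg at h
          exact hxz (mul_mem h.1 h.2)
        rcases hx with hx | hx
        · calc θ x ⊓ θ z ≤ θ x := inf_le_left
            _ = c := by simp [θ, hx]
            _ = θ (x * z) := by simp [θ, hxz]
        · calc θ x ⊓ θ z ≤ θ z := inf_le_right
            _ = c := by simp [θ, hx]
            _ = θ (x * z) := by simp [θ, hxz]
    · intro x
      have hiff : x⁻¹ ∈ K ↔ x ∈ K := by
        constructor
        · intro h; simpa using inv_mem h
        · exact inv_mem
      by_cases hx : x ∈ K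
      · simp [θ, hx, hiff.mpr hx]
      · simp [θ, hx, fun h => hx (hiff.mp h)]
  have hνθ : ν ≤ θ := by
    intro x
    by_cases hx : x ∈ K
    · simp [θ, hx]
    · have : θ x = c := by simp [θ, hx]
      rw [this]
      exact le_sSup ⟨x, hx, rfl⟩
  have hle : LGen ν y ≤ θ y := by
    exact iInf₂_le θ ⟨hsub, hνθ⟩
  have htc : t ≤ c := by
    have h1 := hy.trans hle
    simpa [θ, hyK] using h1
  have hne : (ν '' {z : G | z ∉ K}).Nonempty := ⟨ν y, y, hyK, rfl⟩
  obtain ⟨z, hz, hzc⟩ := hL _ hne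
  have : z ∈ K := Subgroup.subset_closure (by
    show t ≤ ν z
    rw [hzc]; exact htc)
  exact hz this

theorem conj_image_eq {G : Type*} [Group G] {L : Type*} [CompletelyDistribLattice L]
    (η : G → L) (t : L) (g : G) :
    (fun h => g⁻¹ * h * g) '' {h : G | t ≤ η h} = {k : G | t ≤ η (g * k * g⁻¹)} := by
  ext k
  constructor
  · rintro ⟨h, hh, rfl⟩
    show t ≤ η (g * (g⁻¹ * h * g) * g⁻¹)
    have : g * (g⁻¹ * h * g) * g⁻¹ = h := by group
    rw [this]; exact hh
  · intro hk
    exact ⟨g * k * g⁻¹, hk, by group⟩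

theorem stmt6 {G : Type*} [Group G] {L : Type*} [CompletelyDistribLattice L]
    (hL : ∀ S : Set L, S.Nonempty → sSup S ∈ S)
    (μ η : G → L) (hμ : IsLSubgroup μ) (hpro : IsLPronormal μ η)
    (t : L) (ht : t ≤ η 1) :
    ∀ g : G, t ≤ μ g →
      ∃ x ∈ Subgroup.closure
          ({h : G | t ≤ η h} ∪ (fun h => g⁻¹ * h * g) '' {h : G | t ≤ η h}),
        (fun h => x⁻¹ * h * x) '' {h : G | t ≤ η h} =
          (fun h => g⁻¹ * h * g) '' {h : G | t ≤ η h} := by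
  intro g hg
  obtain ⟨b, y, hby, heq⟩ := hpro.2.2 t g hg
  -- t ≤ b
  have htb : t ≤ b := by
    have h1 := congrFun heq 1
    simp only [LConj, mul_one, mul_inv_cancel] at h1
    have : t ⊓ η 1 = t := inf_eq_left.mpr ht
    rw [this] at h1
    rw [← h1]; exact inf_le_left
  -- level set of η ⊔ LConj η t g
  have hlev : {h : G | t ≤ (η ⊔ LConj η t g) h} =
      {h : G | t ≤ η h} ∪ (fun h => g⁻¹ * h * g) '' {h : G | t ≤ η h} := by
    rw [conj_image_eq]
    ext h
    simp only [Set.mem_setOf_eq, Set.mem_union, Pi.sup_apply, LConj]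
    constructor
    · intro hh
      rcases total_of_hL hL (η h) (t ⊓ η (g * h * g⁻¹)) with hle | hle
      · right
        have : η h ⊔ t ⊓ η (g * h * g⁻¹) = t ⊓ η (g * h * g⁻¹) := sup_eq_right.mpr hle
        rw [this] at hh
        exact hh.trans inf_le_right
      · left
        have : η h ⊔ t ⊓ η (g * h * g⁻¹) = η h := sup_eq_left.mpr hle
        rw [this] at hh
        exact hh
    · rintro (hh | hh)
      · exact hh.trans le_sup_left
      · exact le_trans (le_inf le_rfl hh) le_sup_right
  refine ⟨y, ?_, ?_⟩
  · rw [← hlev]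
    exact mem_closure_of_le_LGen hL _ t y (htb.trans hby)
  · rw [conj_image_eq η t y, conj_image_eq η t g]
    ext k
    simp only [Set.mem_setOf_eq]
    have hk := congrFun heq k
    simp only [LConj] at hk
    constructor
    · intro h
      have : t ≤ b ⊓ η (y * k * y⁻¹) := le_inf htb h
      rw [hk] at this
      exact this.trans inf_le_right
    · intro h
      have : t ≤ t ⊓ η (g * k * g⁻¹) := le_inf le_rfl h
      rw [← hk] at this
      exact this.trans inf_le_right
end

section
/- Let η be a normal L-subgroup of μ and a_z an L-point of μ such that the tip of η^{a_z} equals the tip of η (i.e., a ∧ η(e) = η(e)). Then η^{a_z} = η. -/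
open scoped Classical

theorem stmt8 {G : Type*} [Group G] {L : Type*} [CompletelyDistribLattice L]
    (μ η : G → L) (hμ : IsLSubgroup μ) (hnor : IsLNormal μ η)
    (a : L) (z : G) (haz : a ≤ μ z) (htip : a ⊓ η 1 = η 1) :
    LConj η a z = η := by
  obtain ⟨⟨hη1, hη2⟩, hle, hn⟩ := hnor
  have htip' : η 1 ≤ a := by rw [← htip]; exact inf_le_left
  have hxle1 : ∀ x : G, η x ≤ η 1 := by
    intro x
    have h := hη1 x x⁻¹
    rw [hη2, mul_inv_cancel, inf_idem] at h
    exact h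
  funext x
  apply le_antisymm
  · have h1 : η (z * x * z⁻¹) ⊓ μ z⁻¹ ≤ η (z⁻¹ * (z * x * z⁻¹) * z⁻¹⁻¹) := hn _ _
    have he : z⁻¹ * (z * x * z⁻¹) * z⁻¹⁻¹ = x := by group
    rw [he] at h1
    refine le_trans ?_ h1
    show a ⊓ η (z * x * z⁻¹) ≤ _
    rw [inf_comm]
    exact inf_le_inf_left _ (haz.trans (hμ.2 z ▸ le_refl _))
  · have h1 : η x ⊓ μ z ≤ η (z * x * z⁻¹) := hn _ _
    show η x ≤ a ⊓ η (z * x * z⁻¹)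
    refine le_inf ((hxle1 x).trans htip') ?_
    exact le_trans (le_inf (le_refl _) ((hxle1 x).trans (htip'.trans haz))) h1
end

section
/- Every normal L-subgroup η of an L-group μ is a pronormal L-subgroup of μ. In particular, for any L-point a_x ∈ μ, the L-point b_e with b = a ∧ η(e) lies in ⟨η, η^{a_x}⟩ and satisfies η^{b_e} = η^{a_x}. -/
open scoped Classical

theorem stmt9 {G : Type*} [Group G] {L : Type*} [CompletelyDistribLattice L]
    (μ η : G → L) (hμ : IsLSubgroup μ) (hnor : IsLNormal μ η) :
    IsLPronormal μ η ∧
      ∀ (a : L) (x : G), a ≤ μ x →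
        a ⊓ η 1 ≤ LGen (η ⊔ LConj η a x) 1 ∧
          LConj η (a ⊓ η 1) 1 = LConj η a x := by
  obtain ⟨hη, hle, hn⟩ := hnor
  have hη1 : ∀ g : G, η g ≤ η 1 := by
    intro g
    have h := hη.1 g g⁻¹
    rw [hη.2 g, inf_idem, mul_inv_cancel] at h
    exact h
  have hconj : ∀ (a : L) (x : G), a ≤ μ x → LConj η a x = fun g => a ⊓ η g := by
    intro a x hax
    funext g
    apply le_antisymm
    · refine le_inf inf_le_left ?_
      have h := hn (x * g * x⁻¹) x⁻¹
      have hsimp : x⁻¹ * (x * g * x⁻¹) * x⁻¹⁻¹ = g := by group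
      rw [hsimp, hμ.2] at h
      calc a ⊓ η (x * g * x⁻¹) ≤ η (x * g * x⁻¹) ⊓ μ x :=
            le_inf inf_le_right (le_trans inf_le_left hax)
        _ ≤ η g := h
    · refine le_inf inf_le_left ?_
      have h := hn g x
      exact le_trans (le_inf inf_le_right (le_trans inf_le_left hax)) h
  have key : ∀ (a : L) (x : G), a ≤ μ x →
      LConj η (a ⊓ η 1) 1 = LConj η a x := by
    intro a x hax
    rw [hconj a x hax, hconj (a ⊓ η 1) 1 (le_trans inf_le_right (hle 1))]
    funext g
    simp only [inf_assoc]
    congr 1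
    rw [inf_comm (η 1) (η g), inf_eq_left]
    exact hη1 g
  have hmem : ∀ (a : L) (x : G), a ≤ μ x →
      a ⊓ η 1 ≤ LGen (η ⊔ LConj η a x) 1 := by
    intro a x hax
    refine le_iInf fun θ => le_iInf fun hθ => ?_
    have h1 : LConj η a x 1 ≤ θ 1 := le_trans le_sup_right (hθ.2 1)
    refine le_trans ?_ h1
    simp only [LConj, mul_one, mul_inv_cancel]
    exact le_refl _
  refine ⟨⟨hη, hle, fun a x hax => ⟨a ⊓ η 1, 1, hmem a x hax, key a x hax⟩⟩,
    fun a x hax => ⟨hmem a x hax, key a x hax⟩⟩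
end

section
/- Let η, ν be L-subgroups of μ and a_z an L-point of μ. Then the conjugate of the set product satisfies (η ∘ ν)^{a_z} = η^{a_z} ∘ ν^{a_z}. -/
open scoped Classical

theorem stmt11 {G : Type*} [Group G] {L : Type*} [CompletelyDistribLattice L]
    (μ η ν : G → L) (hμ : IsLSubgroup μ)
    (hη : IsLSubgroup η) (hην : η ≤ μ) (hν : IsLSubgroup ν) (hνμ : ν ≤ μ)
    (a : L) (z : G) (haz : a ≤ μ z) :
    LConj (LSetProd η ν) a z = LSetProd (LConj η a z) (LConj ν a z) := by
  funext x
  simp only [LConj, LSetProd, inf_iSup_eq]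
  apply le_antisymm
  · refine iSup_le fun y => iSup_le fun w => iSup_le fun h => ?_
    have hx : z⁻¹ * y * z * (z⁻¹ * w * z) = x := by
      have : x = z⁻¹ * (y * w) * z := by rw [h]; group
      rw [this]; group
    refine le_trans ?_ (le_iSup_of_le (z⁻¹ * y * z) (le_iSup_of_le (z⁻¹ * w * z)
      (le_iSup_of_le hx le_rfl)))
    have e1 : z * (z⁻¹ * y * z) * z⁻¹ = y := by group
    have e2 : z * (z⁻¹ * w * z) * z⁻¹ = w := by group
    rw [e1, e2]
    exact le_inf (inf_le_inf_left a inf_le_left) (inf_le_inf_left a inf_le_right)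
  · refine iSup_le fun u => iSup_le fun v => iSup_le fun h => ?_
    refine le_trans ?_ (le_iSup_of_le (z * u * z⁻¹) (le_iSup_of_le (z * v * z⁻¹)
      (le_iSup_of_le (by rw [← h]; group) le_rfl)))
    exact le_inf (le_trans inf_le_left inf_le_left)
      (inf_le_inf inf_le_right inf_le_right)
end

section
/- If η is a normal L-subgroup of μ and a_x is an L-point of μ, then the conjugate η^{a_x} is also a normal L-subgroup of μ. -/
open scoped Classical

theorem stmt13 {G : Type*} [Group G] {L : Type*} [CompletelyDistribLattice L]
    (μ η : G → L) (hμ : IsLSubgroup μ) (hnor : IsLNormal μ η)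
    (a : L) (x : G) (hax : a ≤ μ x) :
    IsLNormal μ (LConj η a x) := by
  obtain ⟨⟨hmul, hinv⟩, hle, hnorm⟩ := hnor
  obtain ⟨hμmul, hμinv⟩ := hμ
  have key : ∀ g h : G, μ g ⊓ μ h ≤ μ (g * h * g⁻¹) := by
    intro g h
    have h1 : μ g ⊓ μ h ≤ μ (g * h) := hμmul g h
    have h2 : μ (g * h) ⊓ μ g⁻¹ ≤ μ (g * h * g⁻¹) := hμmul _ _
    calc μ g ⊓ μ h ≤ μ (g * h) ⊓ μ g⁻¹ := by
          rw [hμinv]; exact le_inf h1 inf_le_left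
      _ ≤ _ := h2
  refine ⟨⟨?_, ?_⟩, ?_, ?_⟩
  · intro g h
    simp only [LConj]
    have hη : η (x * g * x⁻¹) ⊓ η (x * h * x⁻¹) ≤ η (x * (g * h) * x⁻¹) := by
      have := hmul (x * g * x⁻¹) (x * h * x⁻¹)
      have e : (x * g * x⁻¹) * (x * h * x⁻¹) = x * (g * h) * x⁻¹ := by group
      rwa [e] at this
    refine le_inf (le_trans inf_le_left inf_le_left) ?_
    exact le_trans (inf_le_inf inf_le_right inf_le_right) hη
  · intro g
    simp only [LConj]
    have e : (x * g * x⁻¹)⁻¹ = x * g⁻¹ * x⁻¹ := by group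
    rw [← e, hinv]
  · intro g
    simp only [LConj]
    have h1 : η (x * g * x⁻¹) ≤ μ (x * g * x⁻¹) := hle _
    have h2 : a ⊓ μ (x * g * x⁻¹) ≤ μ g := by
      have hk : μ x⁻¹ ⊓ μ (x * g * x⁻¹) ≤ μ (x⁻¹ * (x * g * x⁻¹) * (x⁻¹)⁻¹) :=
        key x⁻¹ _
      have e : x⁻¹ * (x * g * x⁻¹) * (x⁻¹)⁻¹ = g := by group
      rw [e, hμinv] at hk
      exact le_trans (inf_le_inf hax le_rfl) hk
    exact le_trans (inf_le_inf le_rfl h1) h2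
  · intro g h
    simp only [LConj]
    have h2 : a ⊓ μ h ≤ μ (x * h * x⁻¹) := le_trans (inf_le_inf hax le_rfl) (key x h)
    have h3 : η (x * g * x⁻¹) ⊓ μ (x * h * x⁻¹) ≤
        η ((x * h * x⁻¹) * (x * g * x⁻¹) * (x * h * x⁻¹)⁻¹) := hnorm _ _
    have e : (x * h * x⁻¹) * (x * g * x⁻¹) * (x * h * x⁻¹)⁻¹ = x * (h * g * h⁻¹) * x⁻¹ := by
      group
    rw [e] at h3
    refine le_inf (le_trans inf_le_left inf_le_left) ?_
    calc a ⊓ η (x * g * x⁻¹) ⊓ μ h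
        ≤ η (x * g * x⁻¹) ⊓ μ (x * h * x⁻¹) := by
          refine le_inf (le_trans inf_le_left inf_le_right) (le_trans ?_ h2)
          exact le_inf (le_trans inf_le_left inf_le_left) inf_le_right
      _ ≤ _ := h3
end

section
/- Every maximal L-subgroup of an L-group μ is a pronormal L-subgroup of μ. -/
open scoped Classical

theorem stmt14 {G : Type*} [Group G] {L : Type*} [CompletelyDistribLattice L]
    (μ η : G → L) (hμ : IsLSubgroup μ) (hη : IsLSubgroup η) (hle : η ≤ μ)
    (hproper : (∃ x y : G, η x ≠ η y) ∧ η ≠ μ)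
    (hmax : ∀ θ : G → L, IsLSubgroup θ → η ≤ θ → θ ≤ μ → θ = η ∨ θ = μ) :
    IsLPronormal μ η := by
  have htip : ∀ g : G, η g ≤ η 1 := by
    intro g
    have h1 : η g ⊓ η g⁻¹ ≤ η (g * g⁻¹) := hη.1 g g⁻¹
    rw [hη.2, mul_inv_cancel] at h1
    simpa using h1
  have hconj : ∀ (θ : G → L), IsLSubgroup θ → ∀ z h : G, θ z ⊓ θ h ≤ θ (z * h * z⁻¹) := by
    intro θ hθ z h
    have h1 : θ (z * h) ⊓ θ z⁻¹ ≤ θ (z * h * z⁻¹) := hθ.1 (z * h) z⁻¹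
    have h2 : θ z ⊓ θ h ≤ θ (z * h) := hθ.1 z h
    rw [hθ.2] at h1
    refine le_trans (le_inf (le_trans ?_ h2) inf_le_left) h1
    exact le_inf inf_le_left inf_le_right
  refine ⟨hη, hle, ?_⟩
  intro a x hax
  set ν : G → L := η ⊔ LConj η a x with hνdef
  have hην : η ≤ ν := le_sup_left
  have hνμ : ν ≤ μ := by
    intro g
    refine sup_le (hle g) ?_
    have h1 : LConj η a x g = a ⊓ η (x * g * x⁻¹) := rfl
    rw [h1]
    have h2 : a ⊓ η (x * g * x⁻¹) ≤ μ x ⊓ μ (x * g * x⁻¹) := inf_le_inf hax (hle _)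
    have h3 : μ x⁻¹ ⊓ μ (x * g * x⁻¹) ≤ μ (x⁻¹ * (x * g * x⁻¹) * x⁻¹⁻¹) := hconj μ hμ x⁻¹ _
    have h4 : x⁻¹ * (x * g * x⁻¹) * x⁻¹⁻¹ = g := by group
    rw [h4, hμ.2] at h3
    exact le_trans h2 h3
  have hνK : ν ≤ LGen ν := by
    intro g
    exact le_iInf₂ fun θ hθ => hθ.2 g
  have hηK : η ≤ LGen ν := le_trans hην hνK
  have hKμ : LGen ν ≤ μ := by
    intro g
    exact iInf₂_le μ ⟨hμ, hνμ⟩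
  have hKsub : IsLSubgroup (LGen ν) := by
    constructor
    · intro g h
      refine le_iInf₂ fun θ hθ => ?_
      refine le_trans ?_ (hθ.1.1 g h)
      exact inf_le_inf (iInf₂_le θ hθ) (iInf₂_le θ hθ)
    · intro g
      refine le_antisymm ?_ ?_ <;> refine le_iInf₂ fun θ hθ => ?_
      · rw [← hθ.1.2 g]; exact iInf₂_le θ hθ
      · rw [← hθ.1.2 g⁻¹, inv_inv]; exact iInf₂_le θ hθ
  rcases hmax (LGen ν) hKsub hηK hKμ with hK | hK
  · -- K = η : forward inclusion
    have fwd : ∀ g : G, a ⊓ η (x * g * x⁻¹) ≤ η g := by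
      intro g
      have h1 : LConj η a x g ≤ ν g := le_sup_right
      have h2 : ν g ≤ η g := le_trans (hνK g) (le_of_eq (congrFun hK g))
      exact le_trans h1 h2
    have fwd' : ∀ g : G, a ⊓ η g ≤ η (x⁻¹ * g * x) := by
      intro g
      have h1 := fwd (x⁻¹ * g * x)
      have h2 : x * (x⁻¹ * g * x) * x⁻¹ = g := by group
      rwa [h2] at h1
    set ρ : G → L := fun g => η g ⊔ (a ⊓ η (x⁻¹ * g * x)) with hρdef
    have hmulρ : ∀ g h : G, (x⁻¹ * g * x) * (x⁻¹ * h * x) = x⁻¹ * (g * h) * x := by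
      intro g h; group
    have hρsub : IsLSubgroup ρ := by
      constructor
      · intro g h
        have expand : ρ g ⊓ ρ h =
            (η g ⊓ η h ⊔ (a ⊓ η (x⁻¹ * g * x)) ⊓ η h) ⊔
            (η g ⊓ (a ⊓ η (x⁻¹ * h * x)) ⊔
              (a ⊓ η (x⁻¹ * g * x)) ⊓ (a ⊓ η (x⁻¹ * h * x))) := by
          show (η g ⊔ (a ⊓ η (x⁻¹ * g * x))) ⊓ (η h ⊔ (a ⊓ η (x⁻¹ * h * x))) = _
          rw [inf_sup_left, inf_sup_right, inf_sup_right]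
        rw [expand]
        have hprod : ∀ u v : G, η (x⁻¹ * u * x) ⊓ η (x⁻¹ * v * x) ≤ η (x⁻¹ * (u * v) * x) := by
          intro u v
          have := hη.1 (x⁻¹ * u * x) (x⁻¹ * v * x)
          rwa [hmulρ] at this
        have t1 : η g ⊓ η h ≤ ρ (g * h) := le_trans (hη.1 g h) le_sup_left
        have t2 : (a ⊓ η (x⁻¹ * g * x)) ⊓ η h ≤ ρ (g * h) := by
          refine le_trans ?_ (le_sup_right : _ ≤ ρ (g * h))
          refine le_inf (le_trans inf_le_left inf_le_left) ?_
          refine le_trans ?_ (hprod g h)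
          refine le_inf (le_trans inf_le_left inf_le_right) ?_
          refine le_trans (le_inf (le_trans inf_le_left inf_le_left) inf_le_right) (fwd' h)
        have t3 : η g ⊓ (a ⊓ η (x⁻¹ * h * x)) ≤ ρ (g * h) := by
          refine le_trans ?_ (le_sup_right : _ ≤ ρ (g * h))
          refine le_inf (le_trans inf_le_right inf_le_left) ?_
          refine le_trans ?_ (hprod g h)
          refine le_inf ?_ (le_trans inf_le_right inf_le_right)
          refine le_trans (le_inf (le_trans inf_le_right inf_le_left) inf_le_left) (fwd' g)
        have t4 : (a ⊓ η (x⁻¹ * g * x)) ⊓ (a ⊓ η (x⁻¹ * h * x)) ≤ ρ (g * h) := by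
          refine le_trans ?_ (le_sup_right : _ ≤ ρ (g * h))
          refine le_inf (le_trans inf_le_left inf_le_left) ?_
          exact le_trans (inf_le_inf inf_le_right inf_le_right) (hprod g h)
        exact sup_le (sup_le t1 t2) (sup_le t3 t4)
      · intro g
        have h1 : x⁻¹ * g⁻¹ * x = (x⁻¹ * g * x)⁻¹ := by group
        show η g⁻¹ ⊔ (a ⊓ η (x⁻¹ * g⁻¹ * x)) = η g ⊔ (a ⊓ η (x⁻¹ * g * x))
        rw [h1, hη.2, hη.2]
    have hηρ : η ≤ ρ := fun g => le_sup_left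
    have hρμ : ρ ≤ μ := by
      intro g
      refine sup_le (hle g) ?_
      have h2 : a ⊓ η (x⁻¹ * g * x) ≤ μ x ⊓ μ (x⁻¹ * g * x) := inf_le_inf hax (hle _)
      have h3 : μ x ⊓ μ (x⁻¹ * g * x) ≤ μ (x * (x⁻¹ * g * x) * x⁻¹) := hconj μ hμ x _
      have h4 : x * (x⁻¹ * g * x) * x⁻¹ = g := by group
      rw [h4] at h3
      exact le_trans h2 h3
    rcases hmax ρ hρsub hηρ hρμ with hρ | hρ
    · -- ρ = η : reverse inclusion, conjugating point is 1
      have rev : ∀ g : G, a ⊓ η (x⁻¹ * g * x) ≤ η g := by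
        intro g
        exact le_trans le_sup_right (le_of_eq (congrFun hρ g))
      refine ⟨a ⊓ η 1, 1, ?_, ?_⟩
      · exact le_trans inf_le_right (hηK 1)
      · funext g
        show (a ⊓ η 1) ⊓ η (1 * g * 1⁻¹) = a ⊓ η (x * g * x⁻¹)
        have h1 : (1 : G) * g * 1⁻¹ = g := by group
        rw [h1]
        refine le_antisymm ?_ ?_
        · refine le_inf (le_trans inf_le_left inf_le_left) ?_
          have h2 := rev (x * g * x⁻¹)
          have h3 : x⁻¹ * (x * g * x⁻¹) * x = g := by group
          rw [h3] at h2
          exact le_trans (inf_le_inf inf_le_left le_rfl) h2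
        · refine le_inf (le_inf inf_le_left (le_trans inf_le_right (htip _))) (fwd g)
    · -- ρ = μ : then μ x = η x, so a ≤ η x
      have hx : μ x = η x := by
        have h1 := (congrFun hρ x).symm
        have h2 : x⁻¹ * x * x = x := by group
        rw [hρdef] at h1
        simp only [h2] at h1
        rw [h1, sup_eq_left.mpr inf_le_right]
      exact ⟨a, x, le_trans (hx ▸ hax) (hηK x), rfl⟩
  · -- K = μ
    exact ⟨a, x, by rw [hK]; exact hax, rfl⟩
end

section
/- Let μ be an L-subgroup of G and η an L-subgroup of μ. Suppose there exists a finite ascending chain of L-subgroups η = θ₀ ⊆ θ₁ ⊆ … ⊆ θ_n = μ with each θᵢ normal in θ_{i+1}. Then the normal closure series of η in μ terminates at η in finitely many steps (η is subnormal in μ), and conversely. -/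
open scoped Classical

/-!
The normal closure `η^ψ` is the smallest normal `L`-subgroup of `ψ` containing `η`, and it is
monotone in `ψ`. Given a chain `η = θ₀ ⊲ θ₁ ⊲ … ⊲ θₙ = μ`, induction on `i` therefore gives
`ηᵢ ≤ θₙ₋ᵢ`, so `ηₙ ≤ θ₀ = η ≤ ηₙ`. Conversely, if `ηₘ = η`, the normal closure series read
backwards is such a chain.
-/

section LSubgroup

variable {G : Type*} [Group G] {L : Type*} [CompletelyDistribLattice L]

theorem IsLSubgroup.le_one {μ : G → L} (hμ : IsLSubgroup μ) (x : G) : μ x ≤ μ 1 := by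
  simpa [hμ.2] using hμ.1 x x⁻¹

theorem lGen_le {ν θ : G → L} (hθ : IsLSubgroup θ) (h : ν ≤ θ) : LGen ν ≤ θ :=
  fun _ => iInf₂_le θ ⟨hθ, h⟩

theorem le_lGen (ν : G → L) : ν ≤ LGen ν :=
  fun _ => le_iInf₂ fun _ hθ => hθ.2 _

theorem isLSubgroup_lGen (ν : G → L) : IsLSubgroup (LGen ν) := by
  refine ⟨fun x y => le_iInf₂ fun θ hθ => ?_, fun x => le_antisymm ?_ ?_⟩
  · exact (inf_le_inf (iInf₂_le θ hθ) (iInf₂_le θ hθ)).trans (hθ.1.1 x y)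
  · exact le_iInf₂ fun θ hθ => (iInf₂_le θ hθ).trans (hθ.1.2 x).le
  · exact le_iInf₂ fun θ hθ => (iInf₂_le θ hθ).trans (hθ.1.2 x).ge

theorem lGen_conj_le {μ ν : G → L} (hν : ∀ x y, ν x ⊓ μ y ≤ ν (y * x * y⁻¹)) (x y : G) :
    LGen ν x ⊓ μ y ≤ LGen ν (y * x * y⁻¹) := by
  set φ := LGen ν
  have hφ : IsLSubgroup φ := isLSubgroup_lGen ν
  -- `x ↦ (μ y ⇨ φ (y x y⁻¹))` is an `L`-subgroup containing `ν`, hence containing `φ`.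
  have hθ : IsLSubgroup fun x => μ y ⇨ φ (y * x * y⁻¹) := by
    refine ⟨fun x₁ x₂ => ?_, fun x => ?_⟩
    · rw [← himp_inf_distrib]
      refine himp_le_himp_left ?_
      calc φ (y * x₁ * y⁻¹) ⊓ φ (y * x₂ * y⁻¹) ≤ φ (y * x₁ * y⁻¹ * (y * x₂ * y⁻¹)) := hφ.1 _ _
        _ = φ (y * (x₁ * x₂) * y⁻¹) := by group
    · show μ y ⇨ φ (y * x⁻¹ * y⁻¹) = μ y ⇨ φ (y * x * y⁻¹)
      rw [show y * x⁻¹ * y⁻¹ = (y * x * y⁻¹)⁻¹ by group, hφ.2]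
  have hνθ : ν ≤ fun x => μ y ⇨ φ (y * x * y⁻¹) :=
    fun x => le_himp_iff.2 ((hν x y).trans (le_lGen ν _))
  exact le_himp_iff.1 (lGen_le hθ hνθ x)

theorem lConjAll_le {μ η : G → L} (hμ : IsLSubgroup μ) (h : η ≤ μ) : LConjAll μ η ≤ μ := by
  intro x
  refine iSup_le fun z => iSup_le fun y => iSup_le fun hx => ?_
  subst hx
  calc η y ⊓ μ z ≤ (μ z ⊓ μ y) ⊓ μ z⁻¹ := by
        rw [hμ.2]; exact le_inf (le_inf inf_le_right (inf_le_left.trans (h y))) inf_le_right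
    _ ≤ μ (z * y) ⊓ μ z⁻¹ := inf_le_inf_right _ (hμ.1 z y)
    _ ≤ μ (z * y * z⁻¹) := hμ.1 _ _

theorem le_lConjAll {μ η : G → L} (hμ : IsLSubgroup μ) (h : η ≤ μ) : η ≤ LConjAll μ η :=
  fun x => le_iSup_of_le 1 <| le_iSup_of_le x <| le_iSup_of_le (by group) <|
    le_inf le_rfl ((h x).trans (hμ.le_one x))

theorem lConjAll_conj_le {μ η : G → L} (hμ : IsLSubgroup μ) (x y : G) :
    LConjAll μ η x ⊓ μ y ≤ LConjAll μ η (y * x * y⁻¹) := by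
  simp only [LConjAll, iSup_inf_eq]
  refine iSup_le fun z => iSup_le fun w => iSup_le fun hx => ?_
  subst hx
  refine le_iSup_of_le (y * z) <| le_iSup_of_le w <| le_iSup_of_le (by group) ?_
  exact le_inf (inf_le_left.trans inf_le_left)
    ((le_inf inf_le_right (inf_le_left.trans inf_le_right)).trans (hμ.1 y z))

theorem le_lNormalClosure {μ η : G → L} (hμ : IsLSubgroup μ) (h : η ≤ μ) :
    η ≤ LNormalClosure μ η :=
  (le_lConjAll hμ h).trans (le_lGen _)

theorem isLNormal_lNormalClosure {μ η : G → L} (hμ : IsLSubgroup μ) (h : η ≤ μ) :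
    IsLNormal μ (LNormalClosure μ η) :=
  ⟨isLSubgroup_lGen _, lGen_le hμ (lConjAll_le hμ h), lGen_conj_le (lConjAll_conj_le hμ)⟩

theorem lNormalClosure_le {ψ ν η θ : G → L} (hθ : IsLNormal ψ θ) (hν : ν ≤ ψ) (hη : η ≤ θ) :
    LNormalClosure ν η ≤ θ := by
  refine lGen_le hθ.1 fun x => iSup_le fun z => iSup_le fun y => iSup_le fun hx => ?_
  subst hx
  exact (inf_le_inf (hη y) (hν z)).trans (hθ.2.2 y z)

theorem isLSubgroup_lNcSeries {μ : G → L} (hμ : IsLSubgroup μ) (η : G → L) :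
    ∀ m, IsLSubgroup (LNcSeries μ η m)
  | 0 => hμ
  | _ + 1 => isLSubgroup_lGen _

theorem le_lNcSeries {μ η : G → L} (hμ : IsLSubgroup μ) (hle : η ≤ μ) :
    ∀ m, η ≤ LNcSeries μ η m
  | 0 => hle
  | m + 1 => le_lNormalClosure (isLSubgroup_lNcSeries hμ η m) (le_lNcSeries hμ hle m)

theorem isLNormal_lNcSeries_succ {μ η : G → L} (hμ : IsLSubgroup μ) (hle : η ≤ μ) (m : ℕ) :
    IsLNormal (LNcSeries μ η m) (LNcSeries μ η (m + 1)) :=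
  isLNormal_lNormalClosure (isLSubgroup_lNcSeries hμ η m) (le_lNcSeries hμ hle m)

section Chain

variable {n : ℕ} {θ : ℕ → G → L} (hθ : ∀ i < n, IsLNormal (θ (i + 1)) (θ i))
include hθ

theorem chain_zero_le : ∀ i ≤ n, θ 0 ≤ θ i
  | 0, _ => le_rfl
  | i + 1, hi => (chain_zero_le i (by omega)).trans (hθ i hi).2.1

theorem lNcSeries_le_chain {μ : G → L} (hn : θ n = μ) :
    ∀ i ≤ n, LNcSeries μ (θ 0) i ≤ θ (n - i)
  | 0, _ => hn.ge
  | i + 1, hi => by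
    have hnormal : IsLNormal (θ (n - i)) (θ (n - (i + 1))) := by
      simpa [show n - (i + 1) + 1 = n - i by omega] using hθ (n - (i + 1)) (by omega)
    exact lNormalClosure_le hnormal (lNcSeries_le_chain hn i (by omega))
      (chain_zero_le hθ _ (by omega))

end Chain

end LSubgroup

theorem stmt18_general {G : Type*} [Group G] {L : Type*} [CompletelyDistribLattice L]
    (μ η : G → L) (hμ : IsLSubgroup μ) (hle : η ≤ μ) :
    (∃ (n : ℕ) (θ : ℕ → (G → L)), θ 0 = η ∧ θ n = μ ∧
        ∀ i < n, IsLNormal (θ (i + 1)) (θ i)) ↔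
      IsLSubnormal μ η := by
  constructor
  · rintro ⟨n, θ, rfl, hn, hθ⟩
    have hlast := lNcSeries_le_chain hθ hn n le_rfl
    rw [Nat.sub_self] at hlast
    exact ⟨n, le_antisymm hlast (le_lNcSeries hμ hle n)⟩
  · rintro ⟨m, hm⟩
    refine ⟨m, fun i => LNcSeries μ η (m - i), by simpa using hm, by simp [LNcSeries], ?_⟩
    intro i hi
    simpa [show m - i = m - (i + 1) + 1 by omega] using
      isLNormal_lNcSeries_succ hμ hle (m - (i + 1))

theorem stmt18 {G : Type*} [Group G] {L : Type*} [CompletelyDistribLattice L]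
    (μ η : G → L) (hμ : IsLSubgroup μ) (hη : IsLSubgroup η) (hle : η ≤ μ) :
    (∃ (n : ℕ) (θ : ℕ → (G → L)), θ 0 = η ∧ θ n = μ ∧
        ∀ i < n, IsLNormal (θ (i + 1)) (θ i)) ↔
      IsLSubnormal μ η :=
  stmt18_general μ η hμ hle
end
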